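/- Let k > 0, let L be a k-TSS language over the finite alphabet Σ, and let w_1, w_2, w_3, … be an enumeration of L (a function from the positive integers onto L). Setting L_i = {w_1, …, w_i}, there exists n such that for all m ≥ n, γ_k(α_k(L_m)) = L; moreover L_i ⊆ γ_k(α_k(L_i)) ⊆ L for all i. Hence every k-TSS language is identified in the limit from positive examples by the learner that outputs γ_k(α_k(L_i)). -/

import Mathlib

open Set
open scoped symmDiff

/-- A candidate `k`-test vector: a 4-tuple of sets of strings
(`I` prefixes, `F` suffixes, `T` segments, `C` short strings). -/
structure KTV (A : Type*) where
  I : Set (List A)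
  F : Set (List A)
  T : Set (List A)
  C : Set (List A)

variable {A : Type*}

/-- `Z` is a genuine `k`-test vector. -/
def IsKTV (k : ℕ) (Z : KTV A) : Prop :=
  Z.I ⊆ {w : List A | w.length = k - 1} ∧
  Z.F ⊆ {w : List A | w.length = k - 1} ∧
  Z.T ⊆ {w : List A | w.length = k} ∧
  Z.C ⊆ {w : List A | w.length < k} ∧
  Z.I ∩ Z.F = Z.C ∩ {w : List A | w.length = k - 1}

/-- The componentwise order `⊑` on `k`-test vectors. -/
def ktvLE (Z Z' : KTV A) : Prop :=
  Z.I ⊆ Z'.I ∧ Z.F ⊆ Z'.F ∧ Z.T ⊆ Z'.T ∧ Z.C ⊆ Z'.C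

/-- The union `Z ⊔ Z'` of `k`-test vectors. -/
def ktvUnion (Z Z' : KTV A) : KTV A :=
  ⟨Z.I ∪ Z'.I, Z.F ∪ Z'.F, Z.T ∪ Z'.T,
   Z.C ∪ Z'.C ∪ (Z.I ∩ Z'.F) ∪ (Z'.I ∩ Z.F)⟩

/-- The intersection `Z ⊓ Z'` of `k`-test vectors. -/
def ktvInter (Z Z' : KTV A) : KTV A :=
  ⟨Z.I ∩ Z'.I, Z.F ∩ Z'.F, Z.T ∩ Z'.T, Z.C ∩ Z'.C⟩

/-- The symmetric difference `Z △ Z'` of `k`-test vectors. -/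
def ktvSymmDiff (Z Z' : KTV A) : KTV A :=
  ⟨Z.I ∆ Z'.I, Z.F ∆ Z'.F, Z.T ∆ Z'.T,
   Z.C ∆ Z'.C ∆ (Z'.I ∩ Z.F) ∆ (Z.I ∩ Z'.F)⟩

/-- The least `k`-test vector `⊥ = ⟨∅,∅,∅,∅⟩`. -/
def ktvBot (A : Type*) : KTV A := ⟨∅, ∅, ∅, ∅⟩

/-- The greatest `k`-test vector `⊤ = ⟨Σ^{k-1}, Σ^{k-1}, Σ^k, Σ^{<k}⟩`. -/
def ktvTop (A : Type*) (k : ℕ) : KTV A :=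
  ⟨{w | w.length = k - 1}, {w | w.length = k - 1},
   {w | w.length = k}, {w | w.length < k}⟩

/-- `I_k(L)`: length-`(k-1)` prefixes of words of `L`. -/
def Ik (k : ℕ) (L : Set (List A)) : Set (List A) :=
  {u | u.length = k - 1 ∧ ∃ v, u ++ v ∈ L}

/-- `F_k(L)`: length-`(k-1)` suffixes of words of `L`. -/
def Fk (k : ℕ) (L : Set (List A)) : Set (List A) :=
  {w | w.length = k - 1 ∧ ∃ v, v ++ w ∈ L}

/-- `T_k(L)`: length-`k` substrings of words of `L`. -/
def Tk (k : ℕ) (L : Set (List A)) : Set (List A) :=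
  {v | v.length = k ∧ ∃ u w, u ++ v ++ w ∈ L}

/-- `C_k(L) = (L ∩ Σ^{<k-1}) ∪ (I_k(L) ∩ F_k(L))`. -/
def Ck (k : ℕ) (L : Set (List A)) : Set (List A) :=
  (L ∩ {w | w.length < k - 1}) ∪ (Ik k L ∩ Fk k L)

/-- `α_k(L) = ⟨I_k(L), F_k(L), T_k(L), C_k(L)⟩`. -/
def alphaK (k : ℕ) (L : Set (List A)) : KTV A :=
  ⟨Ik k L, Fk k L, Tk k L, Ck k L⟩

/-- `γ_k(Z) = C ∪ ((IΣ* ∩ Σ*F) \ (Σ*(Σ^k \ T)Σ*))`. -/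
def gammaK (k : ℕ) (Z : KTV A) : Set (List A) :=
  Z.C ∪ (({w | ∃ u ∈ Z.I, u <+: w} ∩ {w | ∃ u ∈ Z.F, u <:+ w}) \
    {w | ∃ v, v.length = k ∧ v ∉ Z.T ∧ v <:+: w})

/-- `L` is `k`-testable in the strict sense. -/
def IsKTSS (k : ℕ) (L : Set (List A)) : Prop :=
  ∃ Z : KTV A, IsKTV k Z ∧ gammaK k Z = L

/-- The cardinality `|Z| = |I| + |F| + |T| + |C ∩ Σ^{<k-1}|` of a `k`-test vector. -/
noncomputable def ktvCard (k : ℕ) (Z : KTV A) : ℕ :=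
  Z.I.ncard + Z.F.ncard + Z.T.ncard + (Z.C ∩ {w : List A | w.length < k - 1}).ncard

/-!
The maps `α_k` and `γ_k` are monotone, `L ⊆ γ_k(α_k(L))` for every `L`, and
`α_k(γ_k(Z)) ⊑ Z` for every `k`-test vector `Z`; hence `γ_k(α_k(L)) = L` for a `k`-TSS
language `L`, and `γ_k(α_k(L_i)) ⊆ γ_k(α_k(L)) = L`. Over a finite alphabet `α_k(L)` is a
finite object each of whose entries is witnessed by a single word of `L`, so some finite
`D ⊆ L` already satisfies `α_k(D') = α_k(L)` for all `D ⊆ D' ⊆ L`. The enumeration has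
listed `D` after finitely many steps, and from then on the learner outputs `γ_k(α_k(L)) = L`.
-/

section AlphaGamma

variable {k : ℕ}

lemma alphaK_mono {L L' : Set (List A)} (h : L ⊆ L') :
    ktvLE (alphaK k L) (alphaK k L') := by
  refine ⟨?_, ?_, ?_, ?_⟩
  · rintro u ⟨hu, v, hv⟩; exact ⟨hu, v, h hv⟩
  · rintro u ⟨hu, v, hv⟩; exact ⟨hu, v, h hv⟩
  · rintro u ⟨hu, s, t, hv⟩; exact ⟨hu, s, t, h hv⟩
  · rintro u (⟨h1, h2⟩ | ⟨⟨h1, v, hv⟩, ⟨h2, v', hv'⟩⟩)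
    · exact Or.inl ⟨h h1, h2⟩
    · exact Or.inr ⟨⟨h1, v, h hv⟩, ⟨h2, v', h hv'⟩⟩

lemma gammaK_mono {Z Z' : KTV A} (h : ktvLE Z Z') : gammaK k Z ⊆ gammaK k Z' := by
  obtain ⟨hI, hF, hT, hC⟩ := h
  rintro x (hx | ⟨⟨⟨u, hu, hp⟩, ⟨u', hu', hs⟩⟩, hne⟩)
  · exact Or.inl (hC hx)
  · refine Or.inr ⟨⟨⟨u, hI hu, hp⟩, ⟨u', hF hu', hs⟩⟩, ?_⟩
    rintro ⟨v, hv, hvT, hvx⟩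
    exact hne ⟨v, hv, fun h => hvT (hT h), hvx⟩

lemma subset_gammaK_alphaK (L : Set (List A)) : L ⊆ gammaK k (alphaK k L) := by
  intro x hx
  obtain hlen | hlen := lt_or_ge x.length (k - 1)
  · exact Or.inl (Or.inl ⟨hx, hlen⟩)
  refine Or.inr ⟨⟨⟨x.take (k - 1), ⟨?_, x.drop (k - 1), by simp [hx]⟩, List.take_prefix _ _⟩,
    ⟨x.drop (x.length - (k - 1)), ⟨?_, x.take (x.length - (k - 1)), by simp [hx]⟩,
      List.drop_suffix _ _⟩⟩, ?_⟩
  · simp [hlen]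
  · simp [Nat.sub_sub_self hlen]
  · rintro ⟨v, hv, hvT, s, t, rfl⟩
    exact hvT ⟨hv, s, t, hx⟩

variable {Z : KTV A}

lemma mem_inter_of_append_mem_C (hZ : IsKTV k Z) {u v : List A} (hu : u.length = k - 1)
    (h : u ++ v ∈ Z.C ∨ v ++ u ∈ Z.C) : u ∈ Z.I ∩ Z.F := by
  have hv : v = [] := by
    have hlt : (u ++ v).length < k ∨ (v ++ u).length < k := h.imp (hZ.2.2.2.1 ·) (hZ.2.2.2.1 ·)
    simp only [List.length_append] at hlt
    exact List.length_eq_zero_iff.mp (by omega)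
  subst hv
  rw [hZ.2.2.2.2]
  exact ⟨by simpa using h, hu⟩

lemma Ik_gammaK_subset (hZ : IsKTV k Z) : Ik k (gammaK k Z) ⊆ Z.I := by
  rintro u ⟨hu, v, hv | ⟨⟨⟨u', hu', hpre⟩, -⟩, -⟩⟩
  · exact (mem_inter_of_append_mem_C hZ hu (Or.inl hv)).1
  · have hlen : u'.length = u.length := by rw [hZ.1 hu', hu]
    rw [List.prefix_iff_eq_take, hlen, List.take_left] at hpre
    exact hpre ▸ hu'

lemma Fk_gammaK_subset (hZ : IsKTV k Z) : Fk k (gammaK k Z) ⊆ Z.F := by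
  rintro u ⟨hu, v, hv | ⟨⟨-, ⟨u', hu', hsuf⟩⟩, -⟩⟩
  · exact (mem_inter_of_append_mem_C hZ hu (Or.inr hv)).2
  · have hlen : u'.length = u.length := by rw [hZ.2.1 hu', hu]
    rw [List.suffix_iff_eq_drop, hlen, List.length_append, Nat.add_sub_cancel,
      List.drop_left] at hsuf
    exact hsuf ▸ hu'

lemma Tk_gammaK_subset (hZ : IsKTV k Z) : Tk k (gammaK k Z) ⊆ Z.T := by
  rintro t ⟨ht, s, r, hC | ⟨-, hne⟩⟩
  · have hlt : (s ++ t ++ r).length < k := hZ.2.2.2.1 hC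
    simp only [List.length_append] at hlt
    omega
  · by_contra htT
    exact hne ⟨t, ht, htT, s, r, rfl⟩

lemma Ck_gammaK_subset (hZ : IsKTV k Z) : Ck k (gammaK k Z) ⊆ Z.C := by
  rintro x (⟨hC | ⟨⟨⟨u, hu, hpre⟩, -⟩, -⟩, hx⟩ | ⟨hxI, hxF⟩)
  · exact hC
  · have hlen := hpre.length_le
    rw [hZ.1 hu] at hlen
    exact absurd hx (by simpa using hlen)
  · have hx : x ∈ Z.I ∩ Z.F := ⟨Ik_gammaK_subset hZ hxI, Fk_gammaK_subset hZ hxF⟩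
    rw [hZ.2.2.2.2] at hx
    exact hx.1

lemma alphaK_gammaK_le (hZ : IsKTV k Z) : ktvLE (alphaK k (gammaK k Z)) Z :=
  ⟨Ik_gammaK_subset hZ, Fk_gammaK_subset hZ, Tk_gammaK_subset hZ, Ck_gammaK_subset hZ⟩

lemma IsKTSS.gammaK_alphaK_eq {L : Set (List A)} (hL : IsKTSS k L) :
    gammaK k (alphaK k L) = L := by
  obtain ⟨Z, hZ, rfl⟩ := hL
  exact (gammaK_mono (alphaK_gammaK_le hZ)).antisymm (subset_gammaK_alphaK _)

end AlphaGamma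

section FiniteSample

lemma exists_finite_subset_forall_eq {α β : Type*} {c : Set α → Set β}
    (hc : ∀ L, c L = ⋃ x ∈ L, c {x}) {L : Set α} (hfin : (c L).Finite) :
    ∃ D ⊆ L, D.Finite ∧ ∀ L', D ⊆ L' → L' ⊆ L → c L' = c L := by
  have hmono : Monotone c := fun L L' h => by
    rw [hc L, hc L']
    exact biUnion_subset_biUnion_left h
  have hwit : ∀ y : c L, ∃ x ∈ L, y.1 ∈ c {x} := fun y => by
    simpa only [mem_iUnion₂, exists_prop] using (hc L).subset y.2
  choose f hfL hf using hwit
  have := hfin.to_subtype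
  refine ⟨range f, range_subset_iff.2 hfL, finite_range f, fun L' hD hL' => ?_⟩
  refine (hmono hL').antisymm fun y hy => ?_
  exact hmono (singleton_subset_iff.2 (hD (mem_range_self ⟨y, hy⟩))) (hf ⟨y, hy⟩)

variable (k : ℕ)

lemma Ik_eq_biUnion (L : Set (List A)) : Ik k L = ⋃ x ∈ L, Ik k {x} := by
  ext u; simp [Ik]

lemma Fk_eq_biUnion (L : Set (List A)) : Fk k L = ⋃ x ∈ L, Fk k {x} := by
  ext u; simp [Fk]

lemma Tk_eq_biUnion (L : Set (List A)) : Tk k L = ⋃ x ∈ L, Tk k {x} := by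
  ext u; simp [Tk]

lemma alphaK_eq_of_eq {L L' : Set (List A)} (hI : Ik k L' = Ik k L) (hF : Fk k L' = Fk k L)
    (hT : Tk k L' = Tk k L)
    (hC : L' ∩ {w | w.length < k - 1} = L ∩ {w | w.length < k - 1}) :
    alphaK k L' = alphaK k L := by
  simp only [alphaK, Ck, hI, hF, hT, hC]

lemma exists_finite_subset_alphaK_eq [Finite A] (L : Set (List A)) :
    ∃ D ⊆ L, D.Finite ∧ ∀ L', D ⊆ L' → L' ⊆ L → alphaK k L' = alphaK k L := by
  obtain ⟨DI, hDIL, hDI, hI⟩ := exists_finite_subset_forall_eq (Ik_eq_biUnion k)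
    ((List.finite_length_eq A (k - 1)).subset fun u hu => hu.1 : (Ik k L).Finite)
  obtain ⟨DF, hDFL, hDF, hF⟩ := exists_finite_subset_forall_eq (Fk_eq_biUnion k)
    ((List.finite_length_eq A (k - 1)).subset fun u hu => hu.1 : (Fk k L).Finite)
  obtain ⟨DT, hDTL, hDT, hT⟩ := exists_finite_subset_forall_eq (Tk_eq_biUnion k)
    ((List.finite_length_eq A k).subset fun u hu => hu.1 : (Tk k L).Finite)
  obtain ⟨DC, hDCL, hDC, hC⟩ := exists_finite_subset_forall_eq
    (c := (· ∩ {w : List A | w.length < k - 1})) (fun L => by simp [← iUnion₂_inter])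
    ((List.finite_length_lt A (k - 1)).subset inter_subset_right)
  refine ⟨DI ∪ DF ∪ DT ∪ DC, union_subset (union_subset (union_subset hDIL hDFL) hDTL) hDCL,
    ((hDI.union hDF).union hDT).union hDC, fun L' hD hL' => ?_⟩
  simp only [union_subset_iff] at hD
  exact alphaK_eq_of_eq k (hI L' hD.1.1.1 hL') (hF L' hD.1.1.2 hL') (hT L' hD.1.2 hL')
    (hC L' hD.2 hL')

end FiniteSample

lemma exists_subset_image_Iio {α : Type*} {w : ℕ → α} {D : Set α} (hD : D.Finite)
    (h : D ⊆ range w) : ∃ n, D ⊆ w '' Iio n := by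
  have hdir : Directed (· ⊆ ·) fun n => w '' Iio n :=
    Monotone.directed_le fun _ _ hmn => image_mono (Iio_subset_Iio hmn)
  have hcover : (hD.toFinset : Set α) ⊆ ⋃ n, w '' Iio n := fun x hx => by
    obtain ⟨i, rfl⟩ := h (hD.mem_toFinset.1 hx)
    exact mem_iUnion.2 ⟨i + 1, mem_image_of_mem w (Nat.lt_succ_self i)⟩
  simpa using hdir.exists_mem_subset_of_finset_subset_biUnion hcover

theorem stmt11_general {A : Type*} [Fintype A] (k : ℕ)
    (L : Set (List A)) (hL : IsKTSS k L)
    (w : ℕ → List A) (hmem : ∀ i, w i ∈ L) (hsurj : ∀ x ∈ L, ∃ i, w i = x) :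
    (∀ i : ℕ, {x | ∃ j < i, w j = x} ⊆ gammaK k (alphaK k {x | ∃ j < i, w j = x}) ∧
      gammaK k (alphaK k {x | ∃ j < i, w j = x}) ⊆ L) ∧
    ∃ n : ℕ, ∀ m ≥ n, gammaK k (alphaK k {x | ∃ j < m, w j = x}) = L := by
  have hsample : ∀ i, w '' Iio i ⊆ L := fun i => image_subset_iff.2 fun j _ => hmem j
  refine ⟨fun i => ⟨subset_gammaK_alphaK _, ?_⟩, ?_⟩
  · exact hL.gammaK_alphaK_eq ▸ gammaK_mono (alphaK_mono (hsample i))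
  · obtain ⟨D, hDL, hD, hstable⟩ := exists_finite_subset_alphaK_eq k L
    obtain ⟨n, hn⟩ := exists_subset_image_Iio hD fun x hx => hsurj x (hDL hx)
    refine ⟨n, fun m hm => ?_⟩
    have hDm : D ⊆ w '' Iio m := hn.trans (image_mono (Iio_subset_Iio hm))
    change gammaK k (alphaK k (w '' Iio m)) = L
    rw [hstable _ hDm (hsample m)]
    exact hL.gammaK_alphaK_eq

/-- every `k`-TSS language is identified in the limit from positive
examples by the learner that outputs `γ_k(α_k(L_i))`. -/
theorem stmt11 {A : Type*} [Fintype A] (k : ℕ) (hk : 0 < k)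
    (L : Set (List A)) (hL : IsKTSS k L)
    (w : ℕ → List A) (hmem : ∀ i, w i ∈ L) (hsurj : ∀ x ∈ L, ∃ i, w i = x) :
    (∀ i : ℕ, {x | ∃ j < i, w j = x} ⊆ gammaK k (alphaK k {x | ∃ j < i, w j = x}) ∧
      gammaK k (alphaK k {x | ∃ j < i, w j = x}) ⊆ L) ∧
    ∃ n : ℕ, ∀ m ≥ n, gammaK k (alphaK k {x | ∃ j < m, w j = x}) = L :=
  stmt11_general k L hL w hmem hsurj
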